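/- arXiv:1901.05920 — 4 statements merged into one kernel-verified Lean document; each statement's English description precedes it below -/
import Mathlib

section
/- Let K be a field containing a primitive q-th root of unity ξ_q, where q is a prime number, and let v be a valuation on K whose residue field has characteristic different from q. If b ∈ K is a q-th power in K and v(b - 1) > γ for some non-negative γ in the value group (assumed q-divisible where needed), then the map sending each q-th root a of b to the unique index j ∈ {0,…,q-1} with v(a - ξ_q^j) > γ/q is a well-defined bijection between the set {a ∈ K : a^q = b} and {0,…,q-1}. -/
/-!
Since `v q = 1`, evaluating `∏_{0<i<q} (1 - ξ^i) = q` shows that each factor has valuation `1`,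
so distinct `q`-th roots of unity, and likewise distinct `q`-th roots of `b`, are at valuation
distance exactly `1`. Evaluating `X^q - 1 = ∏_i (X - ξ^i)` at a root `a` of `b` gives
`∏_i v (a - ξ^i) = v (b - 1) < δ^q`, so some factor is `< δ`; by the ultrametric inequality
and `δ ≤ 1`, no two points at distance `1` can both be that close to `a`. Hence `a ↦ j` is
well defined and injective, and it is a bijection because `b` has exactly `q` roots.
-/

open Finset Polynomial

namespace Valuation

variable {R Γ : Type*} [Ring R] [LinearOrderedCommMonoidWithZero Γ] (v : Valuation R Γ)

theorem map_eq_one_of_map_pow_eq_one {x : R} {n : ℕ} (hn : n ≠ 0) (hx : v (x ^ n) = 1) :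
    v x = 1 :=
  (pow_eq_one_iff_left hn).1 (by rwa [← map_pow])

theorem map_eq_one_of_map_sub_one_lt {x : R} (hx : v (x - 1) < 1) : v x = 1 := by
  simpa using v.map_eq_of_sub_lt (x := 1) (y := x) (by rwa [map_one])

end Valuation

namespace IsPrimitiveRoot

section CommRing

variable {R : Type*} [CommRing R] {n : ℕ} {ξ : R}
  {Γ : Type*} [LinearOrderedCommMonoidWithZero Γ] (v : Valuation R Γ)

theorem valuation_eq_one (hξ : IsPrimitiveRoot ξ n) (hn : n ≠ 0) : v ξ = 1 :=
  v.map_eq_one_of_map_pow_eq_one hn (by rw [hξ.pow_eq_one, map_one])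

variable [IsDomain R]

theorem pow_sub_one_eq_prod (hξ : IsPrimitiveRoot ξ n) (hn : 0 < n) (x : R) :
    x ^ n - 1 = ∏ i ∈ range n, (x - ξ ^ i) := by
  simpa [eval_prod] using congrArg (eval x) (X_pow_sub_C_eq_prod hξ hn (one_pow n))

theorem natCard_pow_eq_pow (hξ : IsPrimitiveRoot ξ n) (hn : 0 < n) {a : R} (ha : a ≠ 0) :
    Nat.card {x : R // x ^ n = a ^ n} = n := by
  classical
  have hmem x : x ∈ nthRootsFinset n (a ^ n) ↔ x ^ n = a ^ n :=
    Polynomial.mem_nthRootsFinset hn _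
  rw [Nat.card_congr (Equiv.subtypeEquivRight fun x => (hmem x).symm), Nat.card_eq_fintype_card,
    Fintype.card_coe, nthRootsFinset_def,
    Multiset.toFinset_card_of_nodup (hξ.nthRoots_nodup (pow_ne_zero n ha)), hξ.card_nthRoots,
    if_pos ⟨a, rfl⟩]

theorem valuation_one_sub_pow_eq_one (hξ : IsPrimitiveRoot ξ n) (hvn : v (n : R) = 1) {i : ℕ}
    (hi0 : i ≠ 0) (hin : i < n) : v (1 - ξ ^ i) = 1 := by
  obtain ⟨m, rfl⟩ : ∃ m, n = m + 1 := Nat.exists_eq_succ_of_ne_zero (by lia)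
  obtain ⟨k, rfl⟩ : ∃ k, i = k + 1 := Nat.exists_eq_succ_of_ne_zero hi0
  have hle : ∀ j, v (1 - ξ ^ j) ≤ 1 := fun j => by
    simpa [hξ.valuation_eq_one v m.succ_ne_zero] using v.map_sub 1 (ξ ^ j)
  have hk : k ∈ range m := mem_range.2 (by lia)
  refine le_antisymm (hle _) ?_
  calc (1 : Γ) = ∏ j ∈ range m, v (1 - ξ ^ (j + 1)) := by
        rw [← map_prod, hξ.prod_one_sub_pow_eq_order, ← hvn, Nat.cast_succ]
    _ = v (1 - ξ ^ (k + 1)) * ∏ j ∈ (range m).erase k, v (1 - ξ ^ (j + 1)) :=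
        (mul_prod_erase _ _ hk).symm
    _ ≤ v (1 - ξ ^ (k + 1)) := mul_le_of_le_one_right' (prod_le_one' fun j _ => hle _)

theorem exists_valuation_sub_pow_lt (hξ : IsPrimitiveRoot ξ n) (hn : 0 < n) {a : R} {δ : Γ}
    (ha : v (a ^ n - 1) < δ ^ n) : ∃ j : Fin n, v (a - ξ ^ (j : ℕ)) < δ := by
  by_contra! hfar
  refine ha.not_ge ?_
  calc δ ^ n = ∏ _i ∈ range n, δ := by rw [prod_const, card_range]
    _ ≤ ∏ i ∈ range n, v (a - ξ ^ i) :=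
        prod_le_prod' fun i hi => hfar ⟨i, mem_range.1 hi⟩
    _ = v (a ^ n - 1) := by rw [← map_prod, hξ.pow_sub_one_eq_prod hn]

end CommRing

variable {K Γ : Type*} [Field K] [LinearOrderedCommGroupWithZero Γ] (v : Valuation K Γ)
  {n : ℕ} {ξ : K}

theorem valuation_sub_eq_one_of_pow_eq_pow (hξ : IsPrimitiveRoot ξ n) (hvn : v (n : K) = 1)
    {x y : K} (hy : v y = 1) (hxy : x ^ n = y ^ n) (hne : x ≠ y) : v (x - y) = 1 := by
  have hy0 : y ≠ 0 := by rintro rfl; simp at hy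
  have : NeZero n := ⟨by rintro rfl; simp at hvn⟩
  obtain ⟨k, hkn, hk⟩ := hξ.eq_pow_of_pow_eq_one (ξ := x / y) (by
    rw [div_pow, hxy, div_self (pow_ne_zero n hy0)])
  have hk0 : k ≠ 0 := by
    rintro rfl
    exact hne ((div_eq_one_iff_eq hy0).1 (pow_zero ξ ▸ hk.symm))
  have hx : x = ξ ^ k * y := by rw [hk, div_mul_cancel₀ x hy0]
  rw [hx, ← sub_one_mul, map_mul, hy, mul_one, v.map_sub_swap,
    hξ.valuation_one_sub_pow_eq_one v hvn hk0 hkn]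

theorem eq_of_valuation_sub_lt (hξ : IsPrimitiveRoot ξ n) (hvn : v (n : K) = 1) {x y a : K}
    {δ : Γ} (hδ : δ ≤ 1) (hy : v y = 1) (hxy : x ^ n = y ^ n) (hxa : v (x - a) < δ)
    (hya : v (y - a) < δ) : x = y := by
  by_contra hne
  have hxy_lt : v (x - y) < δ := by
    simpa only [sub_sub_sub_cancel_right] using v.map_sub_lt hxa hya
  exact (hxy_lt.trans_le hδ).ne (hξ.valuation_sub_eq_one_of_pow_eq_pow v hvn hy hxy hne)

end IsPrimitiveRoot

theorem stmt_0_general {K : Type*} [Field K] {Γ : Type*} [LinearOrderedCommGroupWithZero Γ]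
    (v : Valuation K Γ) (q : ℕ)
    (hres : v (q : K) = 1)
    (ξ : K) (hξ : IsPrimitiveRoot ξ q)
    (γ δ : Γ) (hγ1 : γ ≤ 1) (hδ : δ ^ q = γ)
    (b : K) (hbq : ∃ a : K, a ^ q = b) (hb : v (b - 1) < γ) :
    ∃ J : {a : K // a ^ q = b} ≃ Fin q,
      ∀ (a : {a : K // a ^ q = b}) (j : Fin q),
        v ((a : K) - ξ ^ (j : ℕ)) < δ ↔ j = J a := by
  obtain ⟨a₀, rfl⟩ := hbq
  have hq : q ≠ 0 := by rintro rfl; simp at hres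
  have hδ1 : δ ≤ 1 := (pow_le_one_iff hq).1 (hδ ▸ hγ1)
  have hvb : v (a₀ ^ q) = 1 := v.map_eq_one_of_map_sub_one_lt (hb.trans_le hγ1)
  have ha₀ : a₀ ≠ 0 := by rintro rfl; simp [hq] at hvb
  have hva (a : {a : K // a ^ q = a₀ ^ q}) : v (a : K) = 1 :=
    v.map_eq_one_of_map_pow_eq_one hq (by rw [a.2]; exact hvb)
  have hclose (a : {a : K // a ^ q = a₀ ^ q}) :
      ∃ j : Fin q, v ((a : K) - ξ ^ (j : ℕ)) < δ :=
    hξ.exists_valuation_sub_pow_lt v (Nat.pos_of_ne_zero hq) (by rwa [a.2, hδ])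
  choose J hJ using hclose
  have hJ_unique : ∀ (a : {a : K // a ^ q = a₀ ^ q}) (j : Fin q),
      v ((a : K) - ξ ^ (j : ℕ)) < δ → j = J a := fun a j hj =>
    Fin.ext <| hξ.pow_inj j.2 (J a).2 <| hξ.eq_of_valuation_sub_lt v hres hδ1
      (by rw [map_pow, hξ.valuation_eq_one v hq, one_pow])
      (by simp only [pow_right_comm _ _ q, hξ.pow_eq_one, one_pow])
      (by rwa [v.map_sub_swap]) (by rw [v.map_sub_swap]; exact hJ a)
  have hJ_inj : Function.Injective J := fun a₁ a₂ h => Subtype.ext <|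
    hξ.eq_of_valuation_sub_lt v hres hδ1 (hva a₂) (a₁.2.trans a₂.2.symm) (hJ a₁)
      (h ▸ hJ a₂)
  have hJ_bij : Function.Bijective J := hJ_inj.bijective_of_nat_card_le (by
    rw [Nat.card_fin, hξ.natCard_pow_eq_pow (Nat.pos_of_ne_zero hq) ha₀])
  exact ⟨Equiv.ofBijective J hJ_bij, fun a j => ⟨hJ_unique a j, fun h => h ▸ hJ a⟩⟩

/-- **Separation of q-th roots** (Lemma on the correspondence between roots).
Let `K` be a field containing a primitive `q`-th root of unity `ξ` (`q` prime) and `v`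
a valuation on `K` whose residue field has characteristic `≠ q` (expressed, in Mathlib's
multiplicative convention, as `v q = 1`, i.e. `q` is a unit of the residue field).
Let `γ` be a non-negative `q`-divisible element of the value group — multiplicatively:
`γ ≤ 1`, `γ ≠ 0` and `γ = δ ^ q` — and let `b ∈ K` be a `q`-th power with
`v (b - 1) > γ` (multiplicatively `v (b - 1) < γ`). Then the map sending each `q`-th
root `a` of `b` to the unique `j ∈ {0,…,q-1}` with `v (a - ξ^j) > γ/q`
(multiplicatively `v (a - ξ^j) < δ`) is a well-defined bijection
`{a ∈ K : a^q = b} ≃ {0,…,q-1}`. -/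
theorem stmt_0 {K : Type*} [Field K] {Γ : Type*} [LinearOrderedCommGroupWithZero Γ]
    (v : Valuation K Γ) (q : ℕ) (hq : q.Prime)
    (hres : v (q : K) = 1)
    (ξ : K) (hξ : IsPrimitiveRoot ξ q)
    (γ δ : Γ) (hγ1 : γ ≤ 1) (hγ0 : γ ≠ 0) (hδ : δ ^ q = γ)
    (b : K) (hbq : ∃ a : K, a ^ q = b) (hb : v (b - 1) < γ) :
    ∃ J : {a : K // a ^ q = b} ≃ Fin q,
      ∀ (a : {a : K // a ^ q = b}) (j : Fin q),
        v ((a : K) - ξ ^ (j : ℕ)) < δ ↔ j = J a :=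
  stmt_0_general v q hres ξ hξ γ δ hγ1 hδ b hbq hb
end

section
/- Let K be a field containing a primitive q-th root of unity, q prime, and let v be a valuation on K whose residue field has characteristic different from q. If a ∈ K satisfies a^q = b and v(b - 1) > γ for some non-negative q-divisible γ in the value group, then there exists j ∈ {0,…,q-1} such that v(a - ξ_q^j) > γ/q, where ξ_q is the primitive q-th root of unity. -/
theorem IsPrimitiveRoot.pow_sub_one_eq_prod_sub_pow {R : Type*} [CommRing R] [IsDomain R]
    {n : ℕ} {ζ : R} (hζ : IsPrimitiveRoot ζ n) (hn : 0 < n) (x : R) :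
    x ^ n - 1 = ∏ i ∈ Finset.range n, (x - ζ ^ i) := by
  simpa [Polynomial.eval_prod] using
    congrArg (Polynomial.eval x) (X_pow_sub_C_eq_prod hζ hn (one_pow n))

theorem Finset.exists_lt_of_prod_range_lt_pow {M : Type*} [CommMonoid M] [LinearOrder M]
    [MulLeftMono M] {n : ℕ} {f : ℕ → M} {c : M} (h : ∏ i ∈ Finset.range n, f i < c ^ n) :
    ∃ i < n, f i < c := by
  obtain ⟨i, hi, hlt⟩ := Finset.exists_lt_of_prod_lt' (s := range n) (f := f) (g := fun _ ↦ c)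
    (by rwa [Finset.prod_const, Finset.card_range])
  exact ⟨i, Finset.mem_range.mp hi, hlt⟩

theorem Valuation.exists_sub_pow_lt_of_pow_sub_one_lt {K Γ : Type*} [Field K]
    [LinearOrderedCommGroupWithZero Γ] (v : Valuation K Γ) {n : ℕ} (hn : 0 < n) {ζ : K}
    (hζ : IsPrimitiveRoot ζ n) {a : K} {δ : Γ} (h : v (a ^ n - 1) < δ ^ n) :
    ∃ j < n, v (a - ζ ^ j) < δ := by
  rw [hζ.pow_sub_one_eq_prod_sub_pow hn, map_prod] at h
  exact Finset.exists_lt_of_prod_range_lt_pow h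

theorem stmt_1_general {K : Type*} [Field K] {Γ : Type*} [LinearOrderedCommGroupWithZero Γ]
    (v : Valuation K Γ) (q : ℕ) (hq : q.Prime)
    (ξ : K) (hξ : IsPrimitiveRoot ξ q)
    (γ δ : Γ) (hδ : δ ^ q = γ)
    (a b : K) (hab : a ^ q = b) (hb : v (b - 1) < γ) :
    ∃ j : ℕ, j < q ∧ v (a - ξ ^ j) < δ := by
  subst hab hδ
  exact v.exists_sub_pow_lt_of_pow_sub_one_lt hq.pos hξ hb

/-- Let `K` be a field containing a primitive `q`-th root of unity `ξ` (`q` prime) and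
`v` a valuation on `K` whose residue field has characteristic `≠ q` (in Mathlib's
multiplicative convention: `v q = 1`). If `a ∈ K` satisfies `a^q = b` and
`v(b - 1) > γ` for a non-negative `q`-divisible `γ` in the value group
(multiplicatively: `v (b - 1) < γ` with `γ ≤ 1`, `γ ≠ 0`, `γ = δ ^ q`), then there
exists `j ∈ {0,…,q-1}` with `v (a - ξ^j) > γ/q` (multiplicatively `v (a - ξ^j) < δ`). -/
theorem stmt_1 {K : Type*} [Field K] {Γ : Type*} [LinearOrderedCommGroupWithZero Γ]
    (v : Valuation K Γ) (q : ℕ) (hq : q.Prime)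
    (hres : v (q : K) = 1)
    (ξ : K) (hξ : IsPrimitiveRoot ξ q)
    (γ δ : Γ) (hγ1 : γ ≤ 1) (hγ0 : γ ≠ 0) (hδ : δ ^ q = γ)
    (a b : K) (hab : a ^ q = b) (hb : v (b - 1) < γ) :
    ∃ j : ℕ, j < q ∧ v (a - ξ ^ j) < δ :=
  stmt_1_general v q hq ξ hξ γ δ hδ a b hab hb
end

section
/- Let (K, v) be a valued field, and let U ⊆ K be a subset closed under multiplication (UU ⊆ U) containing 1, with B_γ ⊆ U ⊆ B_α for elements γ > 0 > α of the value group satisfying γ + α > 0, where B_δ = {x : v(x) > δ}. Let d ∈ K with v(d) > max{2γ, γ - α}. Then: (a) d·U ⊆ U; (b) (K \ U)^{-1} ⊆ d^{-1}·U; (c) U + U ⊆ d^{-1}·U. -/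
/-- Key computations for the construction of an externally definable valuation ring.
Let `(K,v)` be a valued field and `U ⊆ K` closed under multiplication with `1 ∈ U`,
squeezed between two balls: `B_γ ⊆ U ⊆ B_α` where, additively, `γ > 0 > α` and
`γ + α > 0`. Let `d ≠ 0` with `v(d) > max{2γ, γ - α}`. Then
(a) `d·U ⊆ U`; (b) `(K \ U)⁻¹ ⊆ d⁻¹·U`; (c) `U + U ⊆ d⁻¹·U`.
In Mathlib's multiplicative convention the additive ball `B_δ = {x : v(x) > δ}` becomes
`{x : v x < δₘ}`; the hypotheses `γ > 0 > α`, `γ + α > 0` become `γₘ < 1 < αₘ`,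
`γₘ * αₘ < 1`; and `v(d) > max{2γ, γ-α}` becomes `v d < min (γₘ^2) (γₘ * αₘ⁻¹)`. -/
theorem stmt_11 {K : Type*} [Field K] {Γ : Type*} [LinearOrderedCommGroupWithZero Γ]
    (v : Valuation K Γ) (U : Set K)
    (γₘ αₘ : Γ) (hγ0 : γₘ ≠ 0) (hα0 : αₘ ≠ 0)
    (hγ1 : γₘ < 1) (h1α : 1 < αₘ) (hγα : γₘ * αₘ < 1)
    (hU1 : (1 : K) ∈ U) (hUU : ∀ x ∈ U, ∀ y ∈ U, x * y ∈ U)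
    (hlow : {x : K | v x < γₘ} ⊆ U) (hup : U ⊆ {x : K | v x < αₘ})
    (d : K) (hd0 : d ≠ 0) (hd : v d < min (γₘ ^ 2) (γₘ * αₘ⁻¹)) :
    (∀ x ∈ U, d * x ∈ U) ∧
      (∀ x : K, x ∉ U → ∃ u ∈ U, x⁻¹ = d⁻¹ * u) ∧
      (∀ x ∈ U, ∀ y ∈ U, ∃ u ∈ U, x + y = d⁻¹ * u) := by
  have hγpos : (0:Γ) < γₘ := lt_of_le_of_ne zero_le' (Ne.symm hγ0)
  have hd1 : v d < γₘ * αₘ⁻¹ := lt_of_lt_of_le hd (min_le_right _ _)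
  have hd2 : v d < γₘ ^ 2 := lt_of_lt_of_le hd (min_le_left _ _)
  have key : ∀ x : K, v x < αₘ → v (d * x) < γₘ := by
    intro x hvx
    rw [map_mul]
    calc v d * v x < (γₘ * αₘ⁻¹) * αₘ :=
          mul_lt_mul_of_le_of_lt_of_nonneg_of_pos hd1.le hvx zero_le' (pos_iff_ne_zero.2 (by
            intro h
            exact absurd (mul_ne_zero hγ0 (inv_ne_zero hα0)) (by simp [h])))
      _ = γₘ := by rw [mul_assoc, inv_mul_cancel₀ hα0, mul_one]
  refine ⟨fun x hx => hlow (key x (hup hx)), ?_, ?_⟩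
  · intro x hx
    have hvx : γₘ ≤ v x := le_of_not_gt (fun h => hx (hlow h))
    have hx0 : x ≠ 0 := by
      intro h; subst h; exact absurd (lt_of_le_of_lt hvx (by simpa using hγpos)) (by simp [hγpos]) 
    refine ⟨d * x⁻¹, hlow ?_, by field_simp⟩
    show v (d * x⁻¹) < γₘ
    rw [map_mul, map_inv₀]
    calc v d * (v x)⁻¹ < γₘ ^ 2 * γₘ⁻¹ := by
          rw [mul_comm (v d), mul_comm (γₘ ^ 2)]
          exact mul_lt_mul_of_le_of_lt_of_nonneg_of_pos (inv_anti₀ hγpos hvx) hd2 zero_le' (pos_iff_ne_zero.2 (inv_ne_zero hγ0))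
      _ = γₘ := by rw [sq, mul_assoc, mul_inv_cancel₀ hγ0, mul_one]
  · intro x hx y hy
    refine ⟨d * (x + y), hlow ?_, by field_simp⟩
    have : v (x + y) < αₘ := lt_of_le_of_lt (v.map_add x y) (max_lt (hup hx) (hup hy))
    exact key _ this
end

section
/- Let (K,v) be a valued field, U ⊆ K a subset with 0, 1 ∈ U, U = -U, UU ⊆ U, U + U ⊆ d^{-1}U, dU ⊆ U, and (K \ U)^{-1} ⊆ d^{-1}U for some d ∈ K with v(d) > 0. Define O_n := {x ∈ K : xU ⊆ d^{-n}U} and O := ⋃_{n<ω} O_n. Then O is a valuation ring of K: it is a subring of K containing U, and for every x ∈ K^×, either x ∈ O or x^{-1} ∈ O. -/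
/-!
Every `O_n` is closed under negation, `O_m · O_n ⊆ O_{m+n}`, and `O_n + O_n ⊆ O_{n+1}` because
`U + U ⊆ d⁻¹ U`; since `d U ⊆ U` the `O_n` increase, so their union is a subring. It contains
`U ⊆ O_0` as `U U ⊆ U`, and for `x ∉ U` we get `x⁻¹ ∈ d⁻¹ U`, whence `x⁻¹ ∈ O_1`.
-/

section

variable {K : Type*} [Field K] {U : Set K} {d : K}

/-- The set `O_n = {x | x U ⊆ d⁻ⁿ U}`, written without inverses. -/
def scaledStabilizer (U : Set K) (d : K) (n : ℕ) : Set K :=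
  {x | ∀ u ∈ U, d ^ n * (x * u) ∈ U}

theorem pow_mul_mem (hdU : ∀ x ∈ U, d * x ∈ U) (k : ℕ) {a : K} (ha : a ∈ U) :
    d ^ k * a ∈ U := by
  induction k with
  | zero => simpa using ha
  | succ k ih => simpa [pow_succ', mul_assoc] using hdU _ ih

theorem scaledStabilizer_mono (hdU : ∀ x ∈ U, d * x ∈ U) {m n : ℕ} (hmn : m ≤ n) :
    scaledStabilizer U d m ⊆ scaledStabilizer U d n := by
  intro x hx u hu
  obtain ⟨k, rfl⟩ := Nat.exists_eq_add_of_le hmn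
  simpa [pow_add, mul_assoc, mul_left_comm] using pow_mul_mem hdU k (hx u hu)

theorem subset_scaledStabilizer_zero (hUU : ∀ x ∈ U, ∀ y ∈ U, x * y ∈ U) :
    U ⊆ scaledStabilizer U d 0 := by
  intro x hx u hu
  simpa using hUU x hx u hu

theorem neg_mem_scaledStabilizer (hUneg : ∀ x ∈ U, -x ∈ U) {n : ℕ} {x : K}
    (hx : x ∈ scaledStabilizer U d n) : -x ∈ scaledStabilizer U d n := by
  intro u hu
  simpa [neg_mul, mul_neg] using hUneg _ (hx u hu)

theorem mul_mem_scaledStabilizer_add {m n : ℕ} {x y : K} (hx : x ∈ scaledStabilizer U d m)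
    (hy : y ∈ scaledStabilizer U d n) : x * y ∈ scaledStabilizer U d (m + n) := by
  intro u hu
  have h : d ^ (m + n) * (x * y * u) = d ^ m * (x * (d ^ n * (y * u))) := by ring
  rw [h]
  exact hx _ (hy u hu)

theorem add_mem_scaledStabilizer_succ (hd0 : d ≠ 0)
    (hUadd : ∀ x ∈ U, ∀ y ∈ U, ∃ u ∈ U, x + y = d⁻¹ * u) {n : ℕ} {x y : K}
    (hx : x ∈ scaledStabilizer U d n) (hy : y ∈ scaledStabilizer U d n) :
    x + y ∈ scaledStabilizer U d (n + 1) := by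
  intro u hu
  obtain ⟨w, hw, hsum⟩ := hUadd _ (hx u hu) _ (hy u hu)
  have h : d ^ (n + 1) * ((x + y) * u) = d * (d ^ n * (x * u) + d ^ n * (y * u)) := by ring
  rwa [h, hsum, ← mul_assoc, mul_inv_cancel₀ hd0, one_mul]

theorem inv_mem_scaledStabilizer_one (hd0 : d ≠ 0) (hUU : ∀ x ∈ U, ∀ y ∈ U, x * y ∈ U)
    (hinv : ∀ x : K, x ∉ U → ∃ u ∈ U, x⁻¹ = d⁻¹ * u) {x : K} (hx : x ∉ U) :
    x⁻¹ ∈ scaledStabilizer U d 1 := by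
  obtain ⟨u, hu, hxu⟩ := hinv x hx
  intro w hw
  rw [hxu, pow_one, ← mul_assoc, ← mul_assoc, mul_inv_cancel₀ hd0, one_mul]
  exact hUU u hu w hw

def scaledStabilizerValuationSubring (hd0 : d ≠ 0) (hU0 : (0 : K) ∈ U)
    (hUneg : ∀ x ∈ U, -x ∈ U) (hUU : ∀ x ∈ U, ∀ y ∈ U, x * y ∈ U)
    (hUadd : ∀ x ∈ U, ∀ y ∈ U, ∃ u ∈ U, x + y = d⁻¹ * u) (hdU : ∀ x ∈ U, d * x ∈ U)
    (hinv : ∀ x : K, x ∉ U → ∃ u ∈ U, x⁻¹ = d⁻¹ * u) : ValuationSubring K where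
  carrier := {x | ∃ n, x ∈ scaledStabilizer U d n}
  zero_mem' := ⟨0, subset_scaledStabilizer_zero hUU hU0⟩
  one_mem' := ⟨0, fun u hu => by simpa using hu⟩
  neg_mem' := fun ⟨n, hx⟩ => ⟨n, neg_mem_scaledStabilizer hUneg hx⟩
  mul_mem' := fun ⟨m, hx⟩ ⟨n, hy⟩ => ⟨m + n, mul_mem_scaledStabilizer_add hx hy⟩
  add_mem' := fun ⟨m, hx⟩ ⟨n, hy⟩ => ⟨m + n + 1, add_mem_scaledStabilizer_succ hd0 hUadd
    (scaledStabilizer_mono hdU (Nat.le_add_right m n) hx)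
    (scaledStabilizer_mono hdU (Nat.le_add_left n m) hy)⟩
  mem_or_inv_mem' x := by
    by_cases hx : x ∈ U
    · exact Or.inl ⟨0, subset_scaledStabilizer_zero hUU hx⟩
    · exact Or.inr ⟨1, inv_mem_scaledStabilizer_one hd0 hUU hinv hx⟩

end

theorem stmt_12_general {K : Type*} [Field K]
    (U : Set K) (d : K) (hd0 : d ≠ 0)
    (hU0 : (0 : K) ∈ U)
    (hUneg : ∀ x ∈ U, -x ∈ U)
    (hUU : ∀ x ∈ U, ∀ y ∈ U, x * y ∈ U)
    (hUadd : ∀ x ∈ U, ∀ y ∈ U, ∃ u ∈ U, x + y = d⁻¹ * u)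
    (hdU : ∀ x ∈ U, d * x ∈ U)
    (hinv : ∀ x : K, x ∉ U → ∃ u ∈ U, x⁻¹ = d⁻¹ * u) :
    ∃ R : Subring K,
      (R : Set K) = {x : K | ∃ n : ℕ, ∀ u ∈ U, d ^ n * (x * u) ∈ U} ∧
      U ⊆ (R : Set K) ∧
      ∀ x : K, x ≠ 0 → x ∈ R ∨ x⁻¹ ∈ R := by
  let O := scaledStabilizerValuationSubring hd0 hU0 hUneg hUU hUadd hdU hinv
  exact ⟨O.toSubring, rfl, fun x hx => ⟨0, subset_scaledStabilizer_zero hUU hx⟩,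
    fun x _ => O.mem_or_inv_mem x⟩

/-- Let `(K,v)` be a valued field and `U ⊆ K` a subset with `0, 1 ∈ U`, `U = -U`,
`U·U ⊆ U`, `U + U ⊆ d⁻¹·U`, `d·U ⊆ U` and `(K \ U)⁻¹ ⊆ d⁻¹·U`, for some `d ≠ 0`
with `v(d) > 0` (multiplicatively `v d < 1`).  Define
`O_n := {x ∈ K : x·U ⊆ d⁻ⁿ·U}` (equivalently `dⁿ·x·U ⊆ U`) and `O := ⋃_n O_n`.
Then `O` is a valuation ring of `K`: a subring of `K` containing `U` such that
every nonzero `x ∈ K` has `x ∈ O` or `x⁻¹ ∈ O`. -/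
theorem stmt_12 {K : Type*} [Field K] {Γ : Type*} [LinearOrderedCommGroupWithZero Γ]
    (v : Valuation K Γ) (U : Set K) (d : K) (hd0 : d ≠ 0) (hd : v d < 1)
    (hU0 : (0 : K) ∈ U) (hU1 : (1 : K) ∈ U)
    (hUneg : ∀ x ∈ U, -x ∈ U)
    (hUU : ∀ x ∈ U, ∀ y ∈ U, x * y ∈ U)
    (hUadd : ∀ x ∈ U, ∀ y ∈ U, ∃ u ∈ U, x + y = d⁻¹ * u)
    (hdU : ∀ x ∈ U, d * x ∈ U)
    (hinv : ∀ x : K, x ∉ U → ∃ u ∈ U, x⁻¹ = d⁻¹ * u) :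
    ∃ R : Subring K,
      (R : Set K) = {x : K | ∃ n : ℕ, ∀ u ∈ U, d ^ n * (x * u) ∈ U} ∧
      U ⊆ (R : Set K) ∧
      ∀ x : K, x ≠ 0 → x ∈ R ∨ x⁻¹ ∈ R :=
  stmt_12_general U d hd0 hU0 hUneg hUU hUadd hdU hinv
end
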